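/- arXiv:1307.0665 — 3 statements merged into one kernel-verified Lean document; each statement's English description precedes it below -/
import Mathlib

section
/- Let (ψ_n)_{n≥0} be a sequence with ψ_n in the n-fold symmetric tensor power of L²(ℝ^d) and K ∈ L²(ℝ^d×ℝ^d) symmetric. Then the pairing term is bounded by the number operator: |∑_{n≥0} √((n+1)(n+2)) ∬ K̄(x,y) ⟨ψ_n ⊗ δ-pairing⟩| ≤ ‖K‖_{L²} ∑_{n≥0} (n+2)‖ψ_n‖². Concretely: |∑_{n≥0} √((n+1)(n+2)) ∬∫ K̄(x,y) ψ̄_n(z) ψ_{n+2}(x,y,z) dx dy dz| ≤ ‖K‖_{L²} ∑_{n≥0}(n+2)‖ψ_n‖². -/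
open MeasureTheory ENNReal

private abbrev Euc (d : ℕ) := EuclideanSpace ℝ (Fin d)

private lemma consMP (d m : ℕ) :
    MeasurePreserving
      (fun q : Euc d × (Fin m → Euc d) =>
        (Fin.cons q.1 q.2 : Fin (m + 1) → EuclideanSpace ℝ (Fin d)))
      (volume.prod volume) volume := by
  have h := (volume_preserving_piFinSuccAbove
      (fun _ : Fin (m + 1) => EuclideanSpace ℝ (Fin d)) 0).symm _
  have hc : ⇑(MeasurableEquiv.piFinSuccAbove
        (fun _ : Fin (m + 1) => EuclideanSpace ℝ (Fin d)) 0).symm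
      = fun q => Fin.cons q.1 q.2 := by
    funext q
    simp [MeasurableEquiv.piFinSuccAbove_symm_apply, Fin.insertNthEquiv,
      Fin.insertNth_zero']
  rwa [hc] at h

private lemma core_bound {d : ℕ} (n : ℕ)
    (K : Euc d × Euc d → ℂ)
    (hK : MemLp K 2 (volume.prod volume))
    (f : (Fin n → Euc d) → ℂ) (hf : MemLp f 2 volume)
    (g : (Fin (n + 2) → Euc d) → ℂ) (hg : MemLp g 2 volume) :
    ‖∫ x, ∫ y, ∫ z : Fin n → Euc d,
        (starRingEnd ℂ) (K (x, y)) * (starRingEnd ℂ) (f z) *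
          g (Fin.cons x (Fin.cons y z))‖
      ≤ Real.sqrt (∫ p, ‖K p‖ ^ 2 ∂(volume.prod volume)) *
        (Real.sqrt (∫ z, ‖f z‖ ^ 2) * Real.sqrt (∫ w, ‖g w‖ ^ 2)) := by
  classical
  set ρ : Measure ((Euc d × Euc d) × (Fin n → Euc d)) :=
    (volume.prod volume).prod volume with hρ
  -- the full measurable equivalence
  let e2 : Euc d × (Fin n → Euc d) ≃ᵐ (Fin (n + 1) → Euc d) :=
    (MeasurableEquiv.piFinSuccAbove (fun _ : Fin (n + 1) => Euc d) 0).symm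
  let e1 : Euc d × (Fin (n + 1) → Euc d) ≃ᵐ (Fin (n + 2) → Euc d) :=
    (MeasurableEquiv.piFinSuccAbove (fun _ : Fin (n + 2) => Euc d) 0).symm
  let Efull : ((Euc d × Euc d) × (Fin n → Euc d)) ≃ᵐ (Fin (n + 2) → Euc d) :=
    (MeasurableEquiv.prodAssoc.trans ((MeasurableEquiv.refl (Euc d)).prodCongr e2)).trans e1
  set efun : ((Euc d × Euc d) × (Fin n → Euc d)) → (Fin (n + 2) → Euc d) :=
    fun q => Fin.cons q.1.1 (Fin.cons q.1.2 q.2) with hefun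
  have hcoeEq : ⇑Efull = efun := by
    funext q
    obtain ⟨⟨x, y⟩, z⟩ := q
    show e1 (x, e2 (y, z)) = _
    simp [e1, e2, efun, MeasurableEquiv.piFinSuccAbove_symm_apply, Fin.insertNthEquiv,
      Fin.insertNth_zero']
  have hmp : MeasurePreserving efun ρ volume := by
    have h := ((consMP d (n + 1)).comp
        (((MeasurePreserving.id (volume : Measure (Euc d))).prod (consMP d n)).comp
          (measurePreserving_prodAssoc (volume : Measure (Euc d)) (volume : Measure (Euc d))
            (volume : Measure (Fin n → Euc d)))))
    have heq : ((fun q : Euc d × (Fin (n + 1) → Euc d) =>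
          (Fin.cons q.1 q.2 : Fin (n + 2) → Euc d)) ∘
        ((Prod.map id fun q : Euc d × (Fin n → Euc d) =>
            (Fin.cons q.1 q.2 : Fin (n + 1) → Euc d)) ∘
          ⇑(MeasurableEquiv.prodAssoc :
              ((Euc d × Euc d) × (Fin n → Euc d)) ≃ᵐ Euc d × (Euc d × (Fin n → Euc d))))) =
        efun := by
      funext q; obtain ⟨⟨x, y⟩, z⟩ := q; rfl
    rwa [heq] at h
  have hemb : MeasurableEmbedding efun := by
    rw [← hcoeEq]; exact Efull.measurableEmbedding
  set F : ((Euc d × Euc d) × (Fin n → Euc d)) → ℂ := fun q => K q.1 * f q.2 with hF_def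
  set G : ((Euc d × Euc d) × (Fin n → Euc d)) → ℂ := g ∘ efun with hG_def
  have hF : MemLp F 2 ρ := by
    have hm : AEStronglyMeasurable F ρ := (hK.1.comp_fst).mul (hf.1.comp_snd)
    rw [memLp_two_iff_integrable_sq_norm hm]
    have : Integrable (fun q : (Euc d × Euc d) × (Fin n → Euc d) =>
        ‖K q.1‖ ^ 2 * ‖f q.2‖ ^ 2) ρ :=
      (hK.norm.integrable_sq).mul_prod (hf.norm.integrable_sq)
    exact this.congr (Filter.Eventually.of_forall fun q => by
      simp [F, norm_mul, mul_pow])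
  have hG : MemLp G 2 ρ := hg.comp_measurePreserving hmp
  set Φ : ((Euc d × Euc d) × (Fin n → Euc d)) → ℂ :=
    fun q => (starRingEnd ℂ) (F q) * G q with hΦ_def
  have hΦ : Integrable Φ ρ := by
    have h := L2.integrable_inner (𝕜 := ℂ) (hF.toLp F) (hG.toLp G)
    refine h.congr ?_
    filter_upwards [hF.coeFn_toLp, hG.coeFn_toLp] with q h1 h2
    simp [Φ, RCLike.inner_apply, h1, h2, mul_comm]
  have hstep1 : ∀ (x y : Euc d) (z : Fin n → Euc d),
      (starRingEnd ℂ) (K (x, y)) * (starRingEnd ℂ) (f z) *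
        g (Fin.cons x (Fin.cons y z)) = Φ ((x, y), z) := by
    intro x y z
    simp only [Φ, F, G, hefun, Function.comp_apply, map_mul]
  have hg2 : Integrable (fun p : Euc d × Euc d => ∫ z, Φ (p, z)) (volume.prod volume) :=
    hΦ.integral_prod_left
  have hIeq : (∫ x, ∫ y, ∫ z : Fin n → Euc d,
      (starRingEnd ℂ) (K (x, y)) * (starRingEnd ℂ) (f z) *
        g (Fin.cons x (Fin.cons y z))) = ∫ q, Φ q ∂ρ := by
    simp only [hstep1]
    exact (integral_integral hg2).trans (integral_integral hΦ)
  have h2e : (2 : ℝ≥0∞) = ENNReal.ofReal (2 : ℝ) := by norm_num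
  have hpq : Real.HolderConjugate 2 2 := Real.HolderConjugate.two_two
  have hF2 : MemLp F (ENNReal.ofReal (2 : ℝ)) ρ := h2e ▸ hF
  have hG2 : MemLp G (ENNReal.ofReal (2 : ℝ)) ρ := h2e ▸ hG
  have hrp : ∀ x : ℝ, x ^ (2 : ℝ) = x ^ (2 : ℕ) := fun x => by
    rw [show (2 : ℝ) = ((2 : ℕ) : ℝ) by norm_num, Real.rpow_natCast]
  have hA : (∫ q, ‖F q‖ ^ (2 : ℝ) ∂ρ)
      = (∫ p, ‖K p‖ ^ 2 ∂(volume.prod volume)) * (∫ z, ‖f z‖ ^ 2) := by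
    have h1 : (∫ q, ‖F q‖ ^ (2 : ℝ) ∂ρ)
        = ∫ q : (Euc d × Euc d) × (Fin n → Euc d),
            (fun p => ‖K p‖ ^ 2) q.1 * (fun z => ‖f z‖ ^ 2) q.2 ∂ρ := by
      refine integral_congr_ae (Filter.Eventually.of_forall fun q => ?_)
      simp [hrp, F, norm_mul, mul_pow]
    rw [h1, hρ]
    exact integral_prod_mul (L := ℝ) (fun p => ‖K p‖ ^ 2) (fun z => ‖f z‖ ^ 2)
  have hB : (∫ q, ‖G q‖ ^ (2 : ℝ) ∂ρ) = ∫ w, ‖g w‖ ^ 2 := by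
    have h0 := hmp.integral_comp hemb (fun w => ‖g w‖ ^ (2 : ℝ))
    rw [show (∫ q, ‖G q‖ ^ (2 : ℝ) ∂ρ) = ∫ q, ‖g (efun q)‖ ^ (2 : ℝ) ∂ρ from rfl, h0]
    exact integral_congr_ae (Filter.Eventually.of_forall fun w => hrp _)
  calc ‖∫ x, ∫ y, ∫ z : Fin n → Euc d,
        (starRingEnd ℂ) (K (x, y)) * (starRingEnd ℂ) (f z) *
          g (Fin.cons x (Fin.cons y z))‖
      = ‖∫ q, Φ q ∂ρ‖ := by rw [hIeq]
    _ ≤ ∫ q, ‖Φ q‖ ∂ρ := norm_integral_le_integral_norm _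
    _ = ∫ q, ‖F q‖ * ‖G q‖ ∂ρ := by
        refine integral_congr_ae (Filter.Eventually.of_forall fun q => ?_)
        simp [Φ, norm_mul]
    _ ≤ (∫ q, ‖F q‖ ^ (2 : ℝ) ∂ρ) ^ (1 / 2 : ℝ) * (∫ q, ‖G q‖ ^ (2 : ℝ) ∂ρ) ^ (1 / 2 : ℝ) :=
        integral_mul_norm_le_Lp_mul_Lq hpq hF2 hG2
    _ = Real.sqrt (∫ p, ‖K p‖ ^ 2 ∂(volume.prod volume)) *
        (Real.sqrt (∫ z, ‖f z‖ ^ 2) * Real.sqrt (∫ w, ‖g w‖ ^ 2)) := by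
        rw [← Real.sqrt_eq_rpow, ← Real.sqrt_eq_rpow, hA, hB,
          Real.sqrt_mul (integral_nonneg fun p => by positivity)]
        ring

/-- Let `(ψ_n)` be a sequence with `ψ_n` an `n`-particle bosonic wave
function (a symmetric function in `L²((ℝ^d)^n)`), with `∑_n (n+2)‖ψ_n‖² < ∞`, and let
`K ∈ L²(ℝ^d × ℝ^d)` be symmetric.  Then the pairing term
`⟨ψ, ∬ K̄(x,y) a(x)a(y) ψ⟩ = ∑_n √((n+1)(n+2)) ∬∫ K̄(x,y) ψ̄_n(z) ψ_{n+2}(x,y,z)` is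
bounded by `‖K‖_{L²} ∑_n (n+2) ‖ψ_n‖²`. -/
theorem pairing_term_bound {d : ℕ}
    (K : EuclideanSpace ℝ (Fin d) × EuclideanSpace ℝ (Fin d) → ℂ)
    (hK : MemLp K 2 (volume.prod volume))
    (hKsymm : ∀ x y, K (x, y) = K (y, x))
    (ψ : ∀ n : ℕ, (Fin n → EuclideanSpace ℝ (Fin d)) → ℂ)
    (hψ : ∀ n, MemLp (ψ n) 2 volume)
    (hψsymm : ∀ n (σ : Equiv.Perm (Fin n)) z, ψ n (z ∘ σ) = ψ n z)
    (hsum : Summable fun n : ℕ => ((n : ℝ) + 2) * ∫ z, ‖ψ n z‖ ^ 2) :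
    ‖∑' n : ℕ, (Real.sqrt (((n : ℝ) + 1) * ((n : ℝ) + 2)) : ℂ) *
        ∫ x, ∫ y, ∫ z : Fin n → EuclideanSpace ℝ (Fin d),
          (starRingEnd ℂ) (K (x, y)) * (starRingEnd ℂ) (ψ n z) *
            ψ (n + 2) (Fin.cons x (Fin.cons y z))‖
      ≤ Real.sqrt (∫ p, ‖K p‖ ^ 2 ∂(volume.prod volume)) *
          ∑' n : ℕ, ((n : ℝ) + 2) * ∫ z, ‖ψ n z‖ ^ 2 := by
  classical
  set SK : ℝ := Real.sqrt (∫ p, ‖K p‖ ^ 2 ∂(volume.prod volume)) with hSK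
  have hSK0 : 0 ≤ SK := Real.sqrt_nonneg _
  set N : ℕ → ℝ := fun n => ∫ z, ‖ψ n z‖ ^ 2 with hN
  have hN0 : ∀ n, 0 ≤ N n := fun n => integral_nonneg fun z => by positivity
  set a : ℕ → ℂ := fun n => (Real.sqrt (((n : ℝ) + 1) * ((n : ℝ) + 2)) : ℂ) *
      ∫ x, ∫ y, ∫ z : Fin n → EuclideanSpace ℝ (Fin d),
        (starRingEnd ℂ) (K (x, y)) * (starRingEnd ℂ) (ψ n z) *
          ψ (n + 2) (Fin.cons x (Fin.cons y z)) with ha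
  set f : ℕ → ℝ := fun n => ((n : ℝ) + 2) * N n with hf
  set g : ℕ → ℝ := fun n => ((n : ℝ) + 1) * N (n + 2) with hg
  set b : ℕ → ℝ := fun n => SK * ((f n + g n) / 2) with hb
  -- termwise bound
  have hab : ∀ n, ‖a n‖ ≤ b n := by
    intro n
    have hcore := core_bound n K hK (ψ n) (hψ n) (ψ (n + 2)) (hψ (n + 2))
    have h1 : ‖a n‖ ≤ Real.sqrt (((n : ℝ) + 1) * ((n : ℝ) + 2)) *
        (SK * (Real.sqrt (N n) * Real.sqrt (N (n + 2)))) := by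
      rw [ha]
      simp only [norm_mul, Complex.norm_real, Real.norm_eq_abs,
        abs_of_nonneg (Real.sqrt_nonneg _)]
      exact mul_le_mul_of_nonneg_left hcore (Real.sqrt_nonneg _)
    have am : Real.sqrt (((n : ℝ) + 1) * ((n : ℝ) + 2)) *
        (Real.sqrt (N n) * Real.sqrt (N (n + 2))) ≤ (f n + g n) / 2 := by
      have e1 : Real.sqrt (((n : ℝ) + 1) * ((n : ℝ) + 2)) *
          (Real.sqrt (N n) * Real.sqrt (N (n + 2)))
          = Real.sqrt (((n : ℝ) + 2) * N n) * Real.sqrt (((n : ℝ) + 1) * N (n + 2)) := by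
        rw [Real.sqrt_mul (by positivity : (0:ℝ) ≤ (n : ℝ) + 1),
          Real.sqrt_mul (by positivity : (0:ℝ) ≤ (n : ℝ) + 2),
          Real.sqrt_mul (by positivity : (0:ℝ) ≤ (n : ℝ) + 1)]
        ring
      have h2 := two_mul_le_add_sq (Real.sqrt (((n : ℝ) + 2) * N n))
        (Real.sqrt (((n : ℝ) + 1) * N (n + 2)))
      have h3 : Real.sqrt (((n : ℝ) + 2) * N n) ^ 2 = ((n : ℝ) + 2) * N n :=
        Real.sq_sqrt (mul_nonneg (by positivity) (hN0 n))
      have h4 : Real.sqrt (((n : ℝ) + 1) * N (n + 2)) ^ 2 = ((n : ℝ) + 1) * N (n + 2) :=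
        Real.sq_sqrt (mul_nonneg (by positivity) (hN0 (n + 2)))
      rw [e1, hf, hg]
      nlinarith [h2, h3, h4]
    calc ‖a n‖ ≤ Real.sqrt (((n : ℝ) + 1) * ((n : ℝ) + 2)) *
        (SK * (Real.sqrt (N n) * Real.sqrt (N (n + 2)))) := h1
      _ = SK * (Real.sqrt (((n : ℝ) + 1) * ((n : ℝ) + 2)) *
          (Real.sqrt (N n) * Real.sqrt (N (n + 2)))) := by ring
      _ ≤ SK * ((f n + g n) / 2) := mul_le_mul_of_nonneg_left am hSK0
      _ = b n := rfl
  -- summability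
  have hfs : Summable f := hsum
  have hshift : Summable (fun n => f (n + 2)) :=
    hfs.comp_injective (fun x y h => by omega)
  have hg0 : ∀ n, 0 ≤ g n := fun n => mul_nonneg (by positivity) (hN0 (n + 2))
  have hgle : ∀ n, g n ≤ f (n + 2) := by
    intro n
    have : f (n + 2) = ((n : ℝ) + 4) * N (n + 2) := by
      rw [hf]; push_cast; ring_nf
    rw [this, hg]
    exact mul_le_mul_of_nonneg_right (by linarith) (hN0 (n + 2))
  have hgs : Summable g := Summable.of_nonneg_of_le hg0 hgle hshift
  have hbs : Summable b := (((hfs.add hgs).div_const 2).mul_left SK)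
  have has : Summable (fun n => ‖a n‖) :=
    Summable.of_nonneg_of_le (fun n => norm_nonneg _) hab hbs
  have hgf : ∑' n, g n ≤ ∑' n, f n := by
    calc ∑' n, g n ≤ ∑' n, f (n + 2) := Summable.tsum_le_tsum hgle hgs hshift
      _ ≤ ∑' n, f n := tsum_comp_le_tsum_of_inj hfs
          (fun n => mul_nonneg (by positivity) (hN0 n)) (fun x y h => by omega)
  calc ‖∑' n, a n‖ ≤ ∑' n, ‖a n‖ := norm_tsum_le_tsum_norm has
    _ ≤ ∑' n, b n := Summable.tsum_le_tsum hab has hbs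
    _ = SK * ((∑' n, f n + ∑' n, g n) / 2) := by
        rw [hb, tsum_mul_left, tsum_div_const, Summable.tsum_add hfs hgs]
    _ ≤ SK * ∑' n, f n := by
        have h5 : (∑' n, f n + ∑' n, g n) / 2 ≤ ∑' n, f n := by linarith
        exact mul_le_mul_of_nonneg_left h5 hSK0
end

section
/- On Fock space, the quadratic pairing operator satisfies ±(1/2)∬(K(x,y) a†(x)a†(y) + K̄(x,y) a(x)a(y)) dx dy ≤ ‖K‖_{L²} (N + 2) as quadratic forms, where N is the number operator, for any symmetric K ∈ L²(ℝ^d × ℝ^d). -/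
open MeasureTheory

section Aux
variable {α β : Type*} [MeasurableSpace α] [MeasurableSpace β]
  {μ : Measure α} {ν : Measure β}

lemma memLp_star {f : α → ℂ} {p : ENNReal} (hf : MemLp f p μ) :
    MemLp (fun x => (starRingEnd ℂ) (f x)) p μ := by
  refine ⟨(Complex.continuous_conj.comp_aestronglyMeasurable hf.1), ?_⟩
  have : eLpNorm (fun x => (starRingEnd ℂ) (f x)) p μ = eLpNorm f p μ := by
    apply eLpNorm_congr_norm_ae
    filter_upwards with x using by simp
  rw [this]; exact hf.2

lemma memLp_mul_fst_snd [SFinite μ] [SFinite ν] {f : α → ℂ} {g : β → ℂ}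
    (hf : MemLp f 2 μ) (hg : MemLp g 2 ν) :
    MemLp (fun p : α × β => f p.1 * g p.2) 2 (μ.prod ν) := by
  refine ⟨hf.1.comp_fst.fun_mul hg.1.comp_snd, ?_⟩
  rw [eLpNorm_lt_top_iff_lintegral_rpow_enorm_lt_top (by norm_num) (by norm_num)]
  show ∫⁻ p, (‖f p.1 * g p.2‖₊ : ENNReal) ^ (2 : ENNReal).toReal ∂(μ.prod ν) < ⊤
  have key : ∫⁻ p, (‖f p.1 * g p.2‖₊ : ENNReal) ^ (2 : ENNReal).toReal ∂(μ.prod ν)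
      = (∫⁻ x, (‖f x‖₊ : ENNReal) ^ (2 : ENNReal).toReal ∂μ) *
        ∫⁻ y, (‖g y‖₊ : ENNReal) ^ (2 : ENNReal).toReal ∂ν := by
    rw [← lintegral_prod_mul
      (hf.1.aemeasurable.nnnorm.coe_nnreal_ennreal.pow_const _)
      (hg.1.aemeasurable.nnnorm.coe_nnreal_ennreal.pow_const _)]
    refine lintegral_congr fun p => ?_
    rw [nnnorm_mul, ENNReal.coe_mul, ENNReal.mul_rpow_of_nonneg _ _ (by positivity)]
  rw [key]
  exact ENNReal.mul_lt_top
    (lintegral_rpow_enorm_lt_top_of_eLpNorm_lt_top (by norm_num) (by norm_num) hf.2)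
    (lintegral_rpow_enorm_lt_top_of_eLpNorm_lt_top (by norm_num) (by norm_num) hg.2)

lemma integrable_mul_L2 {f g : α → ℂ} (hf : MemLp f 2 μ) (hg : MemLp g 2 μ) :
    Integrable (fun a => f a * g a) μ := by
  rw [← memLp_one_iff_integrable]
  have h : (1 : ENNReal) / 1 = 1 / 2 + 1 / 2 := by
    simp [one_div, ENNReal.inv_two_add_inv_two]
  exact hg.smul hf

lemma cs_bound {f g : α → ℂ} (hf : MemLp f 2 μ) (hg : MemLp g 2 μ) :
    ‖∫ a, f a * g a ∂μ‖ ≤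
      Real.sqrt (∫ a, ‖f a‖ ^ 2 ∂μ) * Real.sqrt (∫ a, ‖g a‖ ^ 2 ∂μ) := by
  have h2 : ENNReal.ofReal (2 : ℝ) = 2 := by norm_num
  have hold := integral_mul_norm_le_Lp_mul_Lq (μ := μ)
    Real.HolderConjugate.two_two (h2 ▸ hf) (h2 ▸ hg)
  calc ‖∫ a, f a * g a ∂μ‖ ≤ ∫ a, ‖f a * g a‖ ∂μ := norm_integral_le_integral_norm _
    _ = ∫ a, ‖f a‖ * ‖g a‖ ∂μ := by
        refine integral_congr_ae (Filter.Eventually.of_forall fun a => ?_)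
        exact norm_mul _ _
    _ ≤ (∫ a, ‖f a‖ ^ (2:ℝ) ∂μ) ^ ((1:ℝ)/2) * (∫ a, ‖g a‖ ^ (2:ℝ) ∂μ) ^ ((1:ℝ)/2) := hold
    _ = Real.sqrt (∫ a, ‖f a‖ ^ 2 ∂μ) * Real.sqrt (∫ a, ‖g a‖ ^ 2 ∂μ) := by
        have e : ∀ (h : α → ℂ), (∫ a, ‖h a‖ ^ (2:ℝ) ∂μ) = ∫ a, ‖h a‖ ^ 2 ∂μ := fun h =>
          integral_congr_ae (Filter.Eventually.of_forall fun a => by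
            show ‖h a‖ ^ (2:ℝ) = ‖h a‖ ^ (2:ℕ)
            rw [show (2:ℝ) = ((2:ℕ):ℝ) by norm_num, Real.rpow_natCast])
        rw [Real.sqrt_eq_rpow, Real.sqrt_eq_rpow, e f, e g]

end Aux

section MP2
variable (E : Type*) [MeasureSpace E] [SigmaFinite (volume : Measure E)]

/-- `Fin.cons` as a measurable equiv. -/
def consME (m : ℕ) : (E × (Fin m → E)) ≃ᵐ (Fin (m + 1) → E) :=
  (MeasurableEquiv.piFinSuccAbove (fun _ : Fin (m + 1) => E) 0).symm

omit [SigmaFinite (volume : Measure E)] in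
lemma consME_eq (m : ℕ) :
    ⇑(consME E m) = fun p : E × (Fin m → E) => Fin.cons p.1 p.2 := by
  funext p
  show (Fin.insertNthEquiv (fun _ : Fin (m + 1) => E) 0) p = _
  simp [Fin.insertNthEquiv, Fin.insertNth_zero']

lemma mp_consME (m : ℕ) : MeasurePreserving (consME E m) volume volume :=
  (volume_preserving_piFinSuccAbove (fun _ : Fin (m + 1) => E) 0).symm

/-- The double cons as a measurable equiv. -/
def cons2ME (n : ℕ) : ((E × E) × (Fin n → E)) ≃ᵐ (Fin (n + 2) → E) :=
  (MeasurableEquiv.prodAssoc.trans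
    ((MeasurableEquiv.refl E).prodCongr (consME E n))).trans (consME E (n + 1))

omit [SigmaFinite (volume : Measure E)] in
lemma cons2ME_eq (n : ℕ) :
    ⇑(cons2ME E n) = fun p : (E × E) × (Fin n → E) =>
      Fin.cons p.1.1 (Fin.cons p.1.2 p.2) := by
  funext p
  show consME E (n + 1) (p.1.1, consME E n (p.1.2, p.2)) = _
  rw [consME_eq, consME_eq]

lemma mp_cons2ME (n : ℕ) : MeasurePreserving (cons2ME E n) volume volume := by
  have h := (mp_consME E (n + 1)).comp
    (((MeasurePreserving.id (volume : Measure E)).prod (mp_consME E n)).comp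
      (volume_preserving_prodAssoc (α₁ := E) (β₁ := E) (γ₁ := Fin n → E)))
  have he : ⇑(cons2ME E n) =
      ⇑(consME E (n + 1)) ∘ Prod.map id ⇑(consME E n) ∘ ⇑(MeasurableEquiv.prodAssoc) := rfl
  rw [he]
  exact h

lemma mp_cons2 (n : ℕ) : MeasurePreserving
    (fun p : (E × E) × (Fin n → E) => (Fin.cons p.1.1 (Fin.cons p.1.2 p.2) : Fin (n + 2) → E))
    volume volume := by
  rw [← cons2ME_eq]; exact mp_cons2ME E n

omit [SigmaFinite (volume : Measure E)] in
lemma emb_cons2 (n : ℕ) : MeasurableEmbedding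
    (fun p : (E × E) × (Fin n → E) => (Fin.cons p.1.1 (Fin.cons p.1.2 p.2) : Fin (n + 2) → E)) := by
  rw [← cons2ME_eq]; exact (cons2ME E n).measurableEmbedding

end MP2

/-- The key Cauchy–Schwarz estimate for one term of the pairing form. -/
lemma pairing_term_bound_s4 {E : Type*} [MeasureSpace E] [SigmaFinite (volume : Measure E)]
    (K : E × E → ℂ) (hK : MemLp K 2 (volume.prod volume)) {n : ℕ}
    (φ : (Fin n → E) → ℂ) (hφ : MemLp φ 2 volume)
    (χ : (Fin (n + 2) → E) → ℂ) (hχ : MemLp χ 2 volume) :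
    ‖∫ x, ∫ y, ∫ z : Fin n → E,
        (starRingEnd ℂ) (K (x, y)) * (starRingEnd ℂ) (φ z) * χ (Fin.cons x (Fin.cons y z))‖
      ≤ Real.sqrt (∫ p, ‖K p‖ ^ 2 ∂(volume.prod volume)) *
          (Real.sqrt (∫ z, ‖φ z‖ ^ 2) * Real.sqrt (∫ w, ‖χ w‖ ^ 2)) := by
  set f : (E × E) × (Fin n → E) → ℂ :=
    fun q => (starRingEnd ℂ) (K q.1) * (starRingEnd ℂ) (φ q.2) with hf_def
  set g : (E × E) × (Fin n → E) → ℂ :=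
    fun q => χ (Fin.cons q.1.1 (Fin.cons q.1.2 q.2)) with hg_def
  have hKc : MemLp (fun xy : E × E => (starRingEnd ℂ) (K xy)) 2 (volume.prod volume) :=
    memLp_star hK
  have hφc : MemLp (fun z : Fin n → E => (starRingEnd ℂ) (φ z)) 2 volume :=
    memLp_star hφ
  have hf : MemLp f 2 ((volume.prod volume).prod volume) := memLp_mul_fst_snd hKc hφc
  have hg : MemLp g 2 ((volume.prod volume).prod volume) :=
    hχ.comp_measurePreserving (mp_cons2 E n)
  have hint : Integrable (fun q => f q * g q) ((volume.prod volume).prod volume) :=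
    integrable_mul_L2 hf hg
  have hT : (∫ x, ∫ y, ∫ z : Fin n → E,
        (starRingEnd ℂ) (K (x, y)) * (starRingEnd ℂ) (φ z) * χ (Fin.cons x (Fin.cons y z)))
      = ∫ q, f q * g q ∂((volume.prod volume).prod volume) := by
    have e2 := integral_integral (μ := (volume : Measure E)) (ν := (volume : Measure E))
      (f := fun (x y : E) => ∫ z : Fin n → E, f ((x, y), z) * g ((x, y), z))
      hint.integral_prod_left
    have e1 := integral_integral (μ := ((volume : Measure E).prod volume))
      (ν := (volume : Measure (Fin n → E)))
      (f := fun (p : E × E) (z : Fin n → E) => f (p, z) * g (p, z)) hint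
    exact e2.trans e1
  have hfI : (∫ q, ‖f q‖ ^ 2 ∂((volume.prod volume).prod volume))
      = (∫ p, ‖K p‖ ^ 2 ∂(volume.prod volume)) * ∫ z, ‖φ z‖ ^ 2 := by
    calc (∫ q, ‖f q‖ ^ 2 ∂((volume.prod volume).prod volume))
        = ∫ q : (E × E) × (Fin n → E), (fun xy : E × E => ‖K xy‖ ^ 2) q.1 *
            (fun z : Fin n → E => ‖φ z‖ ^ 2) q.2 ∂((volume.prod volume).prod volume) := by
          refine integral_congr_ae (Filter.Eventually.of_forall fun q => ?_)
          show ‖(starRingEnd ℂ) (K q.1) * (starRingEnd ℂ) (φ q.2)‖ ^ 2 = _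
          rw [norm_mul, mul_pow, RCLike.norm_conj, RCLike.norm_conj]
      _ = (∫ p, ‖K p‖ ^ 2 ∂(volume.prod volume)) * ∫ z, ‖φ z‖ ^ 2 :=
          integral_prod_mul (μ := ((volume : Measure E).prod volume))
            (ν := (volume : Measure (Fin n → E)))
            (fun xy : E × E => ‖K xy‖ ^ 2) (fun z : Fin n → E => ‖φ z‖ ^ 2)
  have hgI : (∫ q, ‖g q‖ ^ 2 ∂((volume.prod volume).prod volume)) = ∫ w, ‖χ w‖ ^ 2 :=
    (mp_cons2 E n).integral_comp (emb_cons2 E n) (fun w => ‖χ w‖ ^ 2)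
  have hI : 0 ≤ ∫ p, ‖K p‖ ^ 2 ∂(volume.prod volume) := integral_nonneg fun p => by positivity
  calc ‖∫ x, ∫ y, ∫ z : Fin n → E,
        (starRingEnd ℂ) (K (x, y)) * (starRingEnd ℂ) (φ z) * χ (Fin.cons x (Fin.cons y z))‖
      ≤ Real.sqrt (∫ q, ‖f q‖ ^ 2 ∂((volume.prod volume).prod volume)) *
        Real.sqrt (∫ q, ‖g q‖ ^ 2 ∂((volume.prod volume).prod volume)) := by
        rw [hT]; exact cs_bound hf hg
    _ = Real.sqrt ((∫ p, ‖K p‖ ^ 2 ∂(volume.prod volume)) * ∫ z, ‖φ z‖ ^ 2) *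
        Real.sqrt (∫ w, ‖χ w‖ ^ 2) := by rw [hfI, hgI]
    _ = Real.sqrt (∫ p, ‖K p‖ ^ 2 ∂(volume.prod volume)) *
        (Real.sqrt (∫ z, ‖φ z‖ ^ 2) * Real.sqrt (∫ w, ‖χ w‖ ^ 2)) := by
        rw [Real.sqrt_mul hI]; ring

/-- On bosonic Fock space, the quadratic pairing operator satisfies
`±(1/2)∬(K(x,y) a†(x)a†(y) + K̄(x,y) a(x)a(y)) ≤ ‖K‖_{L²} (𝒩 + 2)` as quadratic forms,
for any symmetric `K ∈ L²(ℝ^d × ℝ^d)`.  The quadratic form of the pairing operator on a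
state `ψ = (ψ_n)` with `∑_n n‖ψ_n‖² < ∞` is
`Re ∑_n √((n+1)(n+2)) ∬∫ K̄(x,y) ψ̄_n(z) ψ_{n+2}(x,y,z)` and the quadratic form of
`𝒩 + 2` is `∑_n (n+2)‖ψ_n‖²`; the `±` bound is the absolute-value bound below. -/
theorem pairing_operator_form_bound {d : ℕ}
    (K : EuclideanSpace ℝ (Fin d) × EuclideanSpace ℝ (Fin d) → ℂ)
    (hK : MemLp K 2 (volume.prod volume))
    (hKsymm : ∀ x y, K (x, y) = K (y, x))
    (ψ : ∀ n : ℕ, (Fin n → EuclideanSpace ℝ (Fin d)) → ℂ)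
    (hψ : ∀ n, MemLp (ψ n) 2 volume)
    (hψsymm : ∀ n (σ : Equiv.Perm (Fin n)) z, ψ n (z ∘ σ) = ψ n z)
    (hsum : Summable fun n : ℕ => ((n : ℝ) + 2) * ∫ z, ‖ψ n z‖ ^ 2) :
    |(∑' n : ℕ, (Real.sqrt (((n : ℝ) + 1) * ((n : ℝ) + 2)) : ℂ) *
        ∫ x, ∫ y, ∫ z : Fin n → EuclideanSpace ℝ (Fin d),
          (starRingEnd ℂ) (K (x, y)) * (starRingEnd ℂ) (ψ n z) *
            ψ (n + 2) (Fin.cons x (Fin.cons y z))).re|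
      ≤ Real.sqrt (∫ p, ‖K p‖ ^ 2 ∂(volume.prod volume)) *
          ∑' n : ℕ, ((n : ℝ) + 2) * ∫ z, ‖ψ n z‖ ^ 2 := by
  set u : ℕ → ℝ := fun n => ∫ z : Fin n → EuclideanSpace ℝ (Fin d), ‖ψ n z‖ ^ 2 with hu_def
  have hu : ∀ n, 0 ≤ u n := fun n => integral_nonneg fun z => by positivity
  have hsum' : Summable (fun n : ℕ => ((n : ℝ) + 2) * u n) := hsum
  set I : ℝ := ∫ p, ‖K p‖ ^ 2 ∂(volume.prod volume) with hI_def
  have hI : 0 ≤ I := integral_nonneg fun p => by positivity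
  set T : ℕ → ℂ := fun n => ∫ x, ∫ y, ∫ z : Fin n → EuclideanSpace ℝ (Fin d),
      (starRingEnd ℂ) (K (x, y)) * (starRingEnd ℂ) (ψ n z) *
        ψ (n + 2) (Fin.cons x (Fin.cons y z)) with hT_def
  set c : ℕ → ℝ := fun n => Real.sqrt (((n : ℝ) + 1) * ((n : ℝ) + 2)) with hc_def
  set a : ℕ → ℂ := fun n => (c n : ℂ) * T n with ha_def
  have key : ∀ n, ‖T n‖ ≤ Real.sqrt I * (Real.sqrt (u n) * Real.sqrt (u (n + 2))) :=
    fun n => pairing_term_bound_s4 K hK (ψ n) (hψ n) (ψ (n + 2)) (hψ (n + 2))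
  set b : ℕ → ℝ := fun n => ((((n : ℝ) + 2) * u n) + (((n : ℝ) + 1) * u (n + 2))) / 2 with hb_def
  have bound : ∀ n, ‖a n‖ ≤ Real.sqrt I * b n := by
    intro n
    have hc0 : 0 ≤ c n := Real.sqrt_nonneg _
    have h1 : c n * (Real.sqrt (u n) * Real.sqrt (u (n + 2))) ≤ b n := by
      set A := Real.sqrt (((n : ℝ) + 2) * u n) with hA_def
      set B := Real.sqrt (((n : ℝ) + 1) * u (n + 2)) with hB_def
      have hA : A ^ 2 = ((n : ℝ) + 2) * u n :=
        Real.sq_sqrt (mul_nonneg (by positivity) (hu n))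
      have hB : B ^ 2 = ((n : ℝ) + 1) * u (n + 2) :=
        Real.sq_sqrt (mul_nonneg (by positivity) (hu (n + 2)))
      have hAB : c n * (Real.sqrt (u n) * Real.sqrt (u (n + 2))) = A * B := by
        show Real.sqrt (((n : ℝ) + 1) * ((n : ℝ) + 2)) * (Real.sqrt (u n) * Real.sqrt (u (n + 2)))
          = Real.sqrt (((n : ℝ) + 2) * u n) * Real.sqrt (((n : ℝ) + 1) * u (n + 2))
        rw [Real.sqrt_mul (by positivity : (0:ℝ) ≤ (n : ℝ) + 1),
          Real.sqrt_mul (by positivity : (0:ℝ) ≤ (n : ℝ) + 2),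
          Real.sqrt_mul (by positivity : (0:ℝ) ≤ (n : ℝ) + 1)]
        ring
      have hAB2 : A * B ≤ ((((n : ℝ) + 2) * u n) + (((n : ℝ) + 1) * u (n + 2))) / 2 := by
        nlinarith [sq_nonneg (A - B)]
      calc c n * (Real.sqrt (u n) * Real.sqrt (u (n + 2))) = A * B := hAB
        _ ≤ ((((n : ℝ) + 2) * u n) + (((n : ℝ) + 1) * u (n + 2))) / 2 := hAB2
        _ = b n := rfl
    have h2 : ‖a n‖ = c n * ‖T n‖ := by
      show ‖(c n : ℂ) * T n‖ = c n * ‖T n‖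
      rw [norm_mul, Complex.norm_real, Real.norm_eq_abs, abs_of_nonneg hc0]
    calc ‖a n‖ = c n * ‖T n‖ := h2
      _ ≤ c n * (Real.sqrt I * (Real.sqrt (u n) * Real.sqrt (u (n + 2)))) :=
          mul_le_mul_of_nonneg_left (key n) hc0
      _ = Real.sqrt I * (c n * (Real.sqrt (u n) * Real.sqrt (u (n + 2)))) := by ring
      _ ≤ Real.sqrt I * b n := mul_le_mul_of_nonneg_left h1 (Real.sqrt_nonneg _)
  have hb2 : Summable (fun n : ℕ => ((n : ℝ) + 1) * u (n + 2)) := by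
    have hs2 : Summable (fun n : ℕ => ((n : ℝ) + 2 + 2) * u (n + 2)) := by
      have h := (summable_nat_add_iff 2).mpr hsum'
      refine h.congr fun n => ?_
      push_cast
      ring
    refine hs2.of_nonneg_of_le (fun n => mul_nonneg (by positivity) (hu _)) fun n => ?_
    exact mul_le_mul_of_nonneg_right (by linarith) (hu _)
  have hbsum : Summable b := (hsum'.add hb2).div_const 2
  have hnorm : Summable fun n => ‖a n‖ :=
    Summable.of_nonneg_of_le (fun n => norm_nonneg _) bound (hbsum.mul_left _)
  have hshift : ∑' n : ℕ, ((n : ℝ) + 1) * u (n + 2) ≤ ∑' n : ℕ, ((n : ℝ) + 2) * u n := by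
    refine Summable.tsum_le_tsum_of_inj (fun n => n + 2) (add_left_injective 2)
      (fun m _ => mul_nonneg (by positivity) (hu m)) (fun n => ?_) hb2 hsum'
    push_cast
    exact mul_le_mul_of_nonneg_right (by linarith) (hu _)
  have htsum_b : ∑' n, b n ≤ ∑' n : ℕ, ((n : ℝ) + 2) * u n := by
    have hsplit : ∑' n, b n = ((∑' n : ℕ, ((n : ℝ) + 2) * u n) +
        ∑' n : ℕ, ((n : ℝ) + 1) * u (n + 2)) / 2 := by
      rw [tsum_div_const, Summable.tsum_add hsum' hb2]
    rw [hsplit]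
    linarith
  show |(∑' n, a n).re| ≤ Real.sqrt I * ∑' n : ℕ, ((n : ℝ) + 2) * u n
  calc |(∑' n, a n).re| ≤ ‖∑' n, a n‖ := by
        exact Complex.abs_re_le_norm _
    _ ≤ ∑' n, ‖a n‖ := norm_tsum_le_tsum_norm hnorm
    _ ≤ ∑' n, Real.sqrt I * b n := Summable.tsum_le_tsum bound hnorm (hbsum.mul_left _)
    _ = Real.sqrt I * ∑' n, b n := tsum_mul_left
    _ ≤ Real.sqrt I * ∑' n : ℕ, ((n : ℝ) + 2) * u n :=
        mul_le_mul_of_nonneg_left htsum_b (Real.sqrt_nonneg _)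
end

section
/- Uniqueness part of the quadratic-form dynamics: under the hypotheses CA ≥ H(t) ≥ C⁻¹A − CB, −i[H(t),B] ≤ CA (with B ≥ 0 commuting with A), and ±Ḣ(t) ≤ CA, if x ∈ L^∞(0,1;Q(A)) satisfies iẋ(t) = H(t)x(t) in Q(A)* with x(0) = 0, then x(t) = 0 for all t ∈ [0,1). The proof controls ⟨x(t), A(t)⁻¹ x(t)⟩ for A(t) = H(t)+B via the Gronwall inequality, using (d/dt)⟨x(t), A(t)⁻¹x(t)⟩ ≤ C⟨x(t), A(t)⁻¹x(t)⟩. -/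
open Set InnerProductSpace


/-- polarization-type norm bound for symmetric operators -/
lemma qfd_symm_norm_le {V : Type*} [NormedAddCommGroup V] [InnerProductSpace ℂ V]
    (D : V →L[ℂ] V) (hsym : ∀ u v : V, ⟪D u, v⟫_ℂ = ⟪u, D v⟫_ℂ)
    (c : ℝ) (hc : 0 ≤ c) (hD : ∀ u : V, |(⟪u, D u⟫_ℂ).re| ≤ c * ‖u‖ ^ 2) :
    ∀ u : V, ‖D u‖ ≤ c * ‖u‖ := by
  have hconj : ∀ u v : V, ⟪v, D u⟫_ℂ = (starRingEnd ℂ) ⟪u, D v⟫_ℂ := by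
    intro u v
    rw [← hsym u v, ← inner_conj_symm]
  have expand : ∀ u v : V,
      (⟪u + v, D (u + v)⟫_ℂ).re - (⟪u - v, D (u - v)⟫_ℂ).re = 4 * (⟪u, D v⟫_ℂ).re := by
    intro u v
    simp only [map_add, map_sub, inner_add_left, inner_add_right, inner_sub_left,
      inner_sub_right, hconj u v]
    simp only [Complex.add_re, Complex.sub_re, Complex.conj_re]
    ring
  have quad : ∀ u v : V, (⟪u, D v⟫_ℂ).re ≤ c / 2 * (‖u‖ ^ 2 + ‖v‖ ^ 2) := by
    intro u v
    have h1 := hD (u + v)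
    have h2 := hD (u - v)
    have hpar := parallelogram_law_with_norm ℂ u v
    nlinarith [expand u v, abs_le.1 h1, abs_le.1 h2, _root_.sq_abs (‖u+v‖), sq_nonneg (‖u+v‖)]
  have key : ∀ u v : V, (⟪u, D v⟫_ℂ).re ≤ c * ‖u‖ * ‖v‖ := by
    intro u v
    rcases eq_or_ne u 0 with rfl | hu
    · simp
    rcases eq_or_ne v 0 with rfl | hv
    · simp
    have hun : (0:ℝ) < ‖u‖ := norm_pos_iff.2 hu
    have hvn : (0:ℝ) < ‖v‖ := norm_pos_iff.2 hv
    set s : ℝ := Real.sqrt (‖v‖ / ‖u‖) with hs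
    have hspos : 0 < s := Real.sqrt_pos.2 (by positivity)
    have hs2 : s ^ 2 = ‖v‖ / ‖u‖ := Real.sq_sqrt (by positivity)
    have hinner : ⟪((s:ℂ)) • u, D (((s:ℂ))⁻¹ • v)⟫_ℂ = ⟪u, D v⟫_ℂ := by
      rw [map_smul, inner_smul_left, inner_smul_right]
      rw [Complex.conj_ofReal]
      rw [← mul_assoc, mul_inv_cancel₀ (by exact_mod_cast hspos.ne')]
      simp
    have := quad ((s:ℂ) • u) (((s:ℂ))⁻¹ • v)
    rw [hinner] at this
    have hnorm1 : ‖((s:ℂ)) • u‖ = s * ‖u‖ := by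
      rw [norm_smul]; simp [abs_of_pos hspos]
    have hnorm2 : ‖(((s:ℂ))⁻¹) • v‖ = s⁻¹ * ‖v‖ := by
      rw [norm_smul]; simp [abs_of_pos hspos]
    rw [hnorm1, hnorm2] at this
    have hs2' : s⁻¹ ^ 2 = ‖u‖ / ‖v‖ := by
      rw [inv_pow, hs2]; field_simp
    calc (⟪u, D v⟫_ℂ).re ≤ c / 2 * ((s * ‖u‖) ^ 2 + (s⁻¹ * ‖v‖) ^ 2) := this
      _ = c * ‖u‖ * ‖v‖ := by
          rw [mul_pow, mul_pow, hs2, hs2']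
          field_simp
          ring
  intro u
  rcases eq_or_ne (D u) 0 with h0 | h0
  · rw [h0, norm_zero]; positivity
  have : ‖D u‖ ^ 2 ≤ c * ‖D u‖ * ‖u‖ := by
    have := key (D u) u
    rwa [← RCLike.re_to_complex, inner_self_eq_norm_sq] at this
  have hpos : 0 < ‖D u‖ := norm_pos_iff.2 h0
  nlinarith

lemma qfd_inverse_exists {V : Type*} [NormedAddCommGroup V] [InnerProductSpace ℂ V]
    [CompleteSpace V]
    (S : V →L[ℂ] V) (hsym : ∀ u v : V, ⟪S u, v⟫_ℂ = ⟪u, S v⟫_ℂ)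
    (c : ℝ) (hc : 0 < c) (hcoer : ∀ u : V, c * ‖u‖ ^ 2 ≤ (⟪u, S u⟫_ℂ).re) :
    ∃ R : V →L[ℂ] V, (∀ u, S (R u) = u) ∧ (∀ u, R (S u) = u) := by
  have hlow : ∀ u : V, c * ‖u‖ ≤ ‖S u‖ := by
    intro u
    rcases eq_or_ne u 0 with rfl | hu
    · simp
    have hun : (0:ℝ) < ‖u‖ := norm_pos_iff.2 hu
    have h1 : c * ‖u‖ ^ 2 ≤ ‖u‖ * ‖S u‖ := by
      refine (hcoer u).trans ?_
      calc (⟪u, S u⟫_ℂ).re ≤ ‖⟪u, S u⟫_ℂ‖ := Complex.re_le_norm _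
        _ = ‖⟪u, S u⟫_ℂ‖ := rfl
        _ ≤ ‖u‖ * ‖S u‖ := norm_inner_le_norm u (S u)
    nlinarith
  have hinj : Function.Injective S := by
    intro a b hab
    have : c * ‖a - b‖ ≤ ‖S (a - b)‖ := hlow _
    rw [map_sub, hab, sub_self, norm_zero] at this
    have : ‖a - b‖ ≤ 0 := by nlinarith
    rwa [norm_le_zero_iff, sub_eq_zero] at this
  have hanti : AntilipschitzWith (⟨c⁻¹, by positivity⟩ : NNReal) S := by
    apply S.antilipschitz_of_bound
    intro u
    have := hlow u
    have h2 : ‖u‖ ≤ c⁻¹ * ‖S u‖ := by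
      rw [inv_mul_eq_div, le_div_iff₀ hc]; linarith [hlow u]
    exact h2
  have hclosed : IsClosed (Set.range S) := hanti.isClosed_range S.uniformContinuous
  have hrange : LinearMap.range (S : V →ₗ[ℂ] V) = ⊤ := by
    have hcl : IsClosed ((LinearMap.range (S : V →ₗ[ℂ] V) : Submodule ℂ V) : Set V) := by
      have : ((LinearMap.range (S : V →ₗ[ℂ] V) : Submodule ℂ V) : Set V) = Set.range S := by
        ext u; simp [LinearMap.mem_range]
      rw [this]; exact hclosed
    haveI : CompleteSpace (LinearMap.range (S : V →ₗ[ℂ] V) : Submodule ℂ V) := hcl.completeSpace_coe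
    rw [← Submodule.orthogonal_eq_bot_iff]
    rw [Submodule.eq_bot_iff]
    intro w hw
    have h0 : ⟪S w, w⟫_ℂ = 0 := by
      exact (Submodule.mem_orthogonal _ w).1 hw (S w) (LinearMap.mem_range.2 ⟨w, rfl⟩)
    have h1 : (⟪w, S w⟫_ℂ).re = 0 := by
      rw [← inner_conj_symm, h0]; simp
    have := hcoer w
    rw [h1] at this
    by_contra hw0
    have hwn : (0:ℝ) < ‖w‖ := norm_pos_iff.2 hw0
    have := mul_pos hc (pow_pos hwn 2)
    linarith
  have hker : LinearMap.ker (S : V →ₗ[ℂ] V) = ⊥ := LinearMap.ker_eq_bot.2 hinj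
  let e : V ≃L[ℂ] V := ContinuousLinearEquiv.ofBijective S hker hrange
  refine ⟨e.symm.toContinuousLinearMap, ?_, ?_⟩
  · intro u
    exact e.apply_symm_apply u
  · intro u
    exact e.symm_apply_apply u


set_option maxHeartbeats 1000000 in
/-- **uniqueness for the quadratic-form dynamics.**
Under the hypotheses `CA ≥ H(t) ≥ C⁻¹A − CB`, `−i[H(t),B] ≤ CA` (with `B ≥ 0`
commuting with `A`), and `±Ḣ(t) ≤ CA`, if `x ∈ L^∞(0,1;Q(A))` satisfies
`iẋ(t) = H(t)x(t)` in `Q(A)*` with `x(0) = 0`, then `x(t) = 0` for all `t ∈ [0,1)`.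

Encoding as in the existence theorem: `V = Q(A)` with `⟪x,x⟫_V = ⟨x,Ax⟩`, densely
embedded in `ℋ` by `J` with `‖Jx‖ ≤ ‖x‖` (`A ≥ 1`); `H(t)` is the form
`h_t(x,y) = ⟪x, T t y⟫_V` with `T t` self-adjoint; `B` bounded positive self-adjoint
on `ℋ` restricting to `BV` on `V`; the equation holds weakly against all `v ∈ V`. -/
theorem quadratic_form_dynamics_uniqueness
    {V H : Type*} [NormedAddCommGroup V] [InnerProductSpace ℂ V] [CompleteSpace V]
    [NormedAddCommGroup H] [InnerProductSpace ℂ H] [CompleteSpace H]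
    (J : V →L[ℂ] H) (hJinj : Function.Injective J) (hJdense : DenseRange J)
    (hJ1 : ∀ x : V, ‖J x‖ ≤ ‖x‖)
    (B : H →L[ℂ] H) (hBsa : IsSelfAdjoint B) (hBpos : ∀ y : H, 0 ≤ (⟪y, B y⟫_ℂ).re)
    (BV : V →L[ℂ] V) (hBV : ∀ x : V, J (BV x) = B (J x))
    (hBVsym : ∀ x y : V, ⟪BV x, y⟫_ℂ = ⟪x, BV y⟫_ℂ)
    (T : ℝ → V →L[ℂ] V) (hTsa : ∀ t, IsSelfAdjoint (T t))
    (C : ℝ) (hC : 0 < C)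
    (hupper : ∀ t ∈ Ico (0 : ℝ) 1, ∀ x : V, (⟪x, T t x⟫_ℂ).re ≤ C * ‖x‖ ^ 2)
    (hlower : ∀ t ∈ Ico (0 : ℝ) 1, ∀ x : V,
      C⁻¹ * ‖x‖ ^ 2 - C * (⟪J x, B (J x)⟫_ℂ).re ≤ (⟪x, T t x⟫_ℂ).re)
    (hcommB : ∀ t ∈ Ico (0 : ℝ) 1, ∀ x : V,
      (-(Complex.I * (⟪x, T t (BV x)⟫_ℂ - ⟪BV x, T t x⟫_ℂ))).re ≤ C * ‖x‖ ^ 2)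
    (Td : ℝ → V → ℝ)
    (hTd : ∀ x : V, ∀ t ∈ Ico (0 : ℝ) 1,
      HasDerivAt (fun s => (⟪x, T s x⟫_ℂ).re) (Td t x) t)
    (hTdbound : ∀ x : V, ∀ t ∈ Ico (0 : ℝ) 1, |Td t x| ≤ C * ‖x‖ ^ 2)
    (x : ℝ → V) (hx0 : x 0 = 0)
    (hxbdd : ∃ M : ℝ, ∀ t ∈ Ico (0 : ℝ) 1, ‖x t‖ ≤ M)
    (hxeq : ∀ t ∈ Ico (0 : ℝ) 1, ∀ v : V,
      HasDerivAt (fun s => ⟪J v, J (x s)⟫_ℂ) ((-Complex.I) * ⟪v, T t (x t)⟫_ℂ) t) :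
    ∀ t ∈ Ico (0 : ℝ) 1, x t = 0 := by
  obtain ⟨M, hM⟩ := hxbdd
  have hM0 : 0 ≤ M := le_trans (norm_nonneg _) (hM 0 ⟨le_refl 0, one_pos⟩)
  -- the operator E with ⟪u, E v⟫ = ⟪J u, J v⟫
  set E : V →L[ℂ] V := (ContinuousLinearMap.adjoint J).comp J with hEdef
  have hE : ∀ u v : V, ⟪u, E v⟫_ℂ = ⟪J u, J v⟫_ℂ := by
    intro u v
    simp only [hEdef, ContinuousLinearMap.comp_apply]
    exact ContinuousLinearMap.adjoint_inner_right J u (J v)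
  have hEnorm : ∀ u : V, ‖E u‖ ≤ ‖u‖ := by
    intro u
    rcases eq_or_ne (E u) 0 with h0 | h0
    · rw [h0, norm_zero]; exact norm_nonneg u
    have h2 : ‖E u‖ ^ 2 ≤ ‖E u‖ * ‖u‖ := by
      have h1 : (⟪E u, E u⟫_ℂ).re = ‖E u‖ ^ 2 := by
        rw [← RCLike.re_to_complex, inner_self_eq_norm_sq]
      calc ‖E u‖ ^ 2 = (⟪E u, E u⟫_ℂ).re := h1.symm
        _ = (⟪J (E u), J u⟫_ℂ).re := by rw [hE]
        _ ≤ ‖⟪J (E u), J u⟫_ℂ‖ := Complex.re_le_norm _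
        _ = ‖⟪J (E u), J u⟫_ℂ‖ := rfl
        _ ≤ ‖J (E u)‖ * ‖J u‖ := norm_inner_le_norm _ _
        _ ≤ ‖E u‖ * ‖u‖ := by
            exact mul_le_mul (hJ1 _) (hJ1 _) (norm_nonneg _) (norm_nonneg _)
    have hpos : 0 < ‖E u‖ := norm_pos_iff.2 h0
    nlinarith
  -- the operator Bt = E ∘ BV
  set Bt : V →L[ℂ] V := E.comp BV with hBtdef
  have hBt : ∀ u v : V, ⟪u, Bt v⟫_ℂ = ⟪J u, B (J v)⟫_ℂ := by
    intro u v
    simp only [hBtdef, ContinuousLinearMap.comp_apply]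
    rw [hE, hBV]
  -- symmetry facts
  have hTsym : ∀ t : ℝ, ∀ u v : V, ⟪T t u, v⟫_ℂ = ⟪u, T t v⟫_ℂ := by
    intro t u v
    have h := hTsa t
    rw [← ContinuousLinearMap.adjoint_inner_left (T t) v u]
    rw [h.adjoint_eq]
  have hBsym' : ∀ a b : H, ⟪B a, b⟫_ℂ = ⟪a, B b⟫_ℂ := by
    intro a b
    rw [← ContinuousLinearMap.adjoint_inner_left B b a, hBsa.adjoint_eq]
  have hBtsym : ∀ u v : V, ⟪Bt u, v⟫_ℂ = ⟪u, Bt v⟫_ℂ := by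
    intro u v
    rw [← inner_conj_symm, hBt v u, hBt u v, inner_conj_symm]
    exact hBsym' _ _
  -- the operator S t
  set S : ℝ → V →L[ℂ] V := fun t => T t + (C : ℂ) • Bt with hSdef
  have hSapply : ∀ t u, S t u = T t u + (C : ℂ) • Bt u := fun t u => rfl
  have hSsym : ∀ t : ℝ, ∀ u v : V, ⟪S t u, v⟫_ℂ = ⟪u, S t v⟫_ℂ := by
    intro t u v
    simp only [hSapply, inner_add_left, inner_add_right, inner_smul_left, inner_smul_right,
      hTsym t u v, hBtsym u v, Complex.conj_ofReal]
  -- quadratic form facts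
  have hBform : ∀ u : V, 0 ≤ (⟪J u, B (J u)⟫_ℂ).re ∧ (⟪J u, B (J u)⟫_ℂ).re ≤ ‖B‖ * ‖u‖ ^ 2 := by
    intro u
    refine ⟨hBpos (J u), ?_⟩
    calc (⟪J u, B (J u)⟫_ℂ).re ≤ ‖⟪J u, B (J u)⟫_ℂ‖ := Complex.re_le_norm _
      _ = ‖⟪J u, B (J u)⟫_ℂ‖ := rfl
      _ ≤ ‖J u‖ * ‖B (J u)‖ := norm_inner_le_norm _ _
      _ ≤ ‖u‖ * (‖B‖ * ‖u‖) := by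
          refine mul_le_mul (hJ1 u) ?_ (norm_nonneg _) (norm_nonneg _)
          calc ‖B (J u)‖ ≤ ‖B‖ * ‖J u‖ := B.le_opNorm _
            _ ≤ ‖B‖ * ‖u‖ := by
                exact mul_le_mul_of_nonneg_left (hJ1 u) (norm_nonneg B)
      _ = ‖B‖ * ‖u‖ ^ 2 := by ring
  set K : ℝ := C * (1 + ‖B‖) with hKdef
  have hK : 0 < K := by positivity
  have hCK : C ≤ K := by nlinarith [norm_nonneg B]
  have hCBK : C * ‖B‖ ≤ K := by nlinarith [norm_nonneg B]
  have hSre : ∀ t : ℝ, ∀ u : V,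
      (⟪u, S t u⟫_ℂ).re = (⟪u, T t u⟫_ℂ).re + C * (⟪J u, B (J u)⟫_ℂ).re := by
    intro t u
    rw [hSapply]
    rw [inner_add_right, inner_smul_right, Complex.add_re]
    congr 1
    rw [hBt]
    simp [Complex.mul_re]
  have hScoer : ∀ t ∈ Ico (0:ℝ) 1, ∀ u : V, C⁻¹ * ‖u‖ ^ 2 ≤ (⟪u, S t u⟫_ℂ).re := by
    intro t ht u
    rw [hSre]
    have := hlower t ht u
    linarith
  have hSupper : ∀ t ∈ Ico (0:ℝ) 1, ∀ u : V, (⟪u, S t u⟫_ℂ).re ≤ K * ‖u‖ ^ 2 := by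
    intro t ht u
    rw [hSre]
    have h1 := hupper t ht u
    have h2 := (hBform u).2
    have h3 : C * (⟪J u, B (J u)⟫_ℂ).re ≤ C * (‖B‖ * ‖u‖ ^ 2) :=
      mul_le_mul_of_nonneg_left h2 hC.le
    have : K * ‖u‖ ^ 2 = C * ‖u‖ ^ 2 + C * ‖B‖ * ‖u‖ ^ 2 := by rw [hKdef]; ring
    nlinarith
  have hSnorm : ∀ t ∈ Ico (0:ℝ) 1, ∀ u : V, ‖S t u‖ ≤ K * ‖u‖ := by
    intro t ht
    refine qfd_symm_norm_le (S t) (hSsym t) K hK.le ?_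
    intro u
    rw [abs_le]
    constructor
    · have h1 := hScoer t ht u
      have h2 : (0:ℝ) ≤ C⁻¹ * ‖u‖ ^ 2 := by positivity
      nlinarith [sq_nonneg ‖u‖]
    · exact hSupper t ht u
  have hTnorm : ∀ t ∈ Ico (0:ℝ) 1, ∀ u : V, ‖T t u‖ ≤ K * ‖u‖ := by
    intro t ht
    refine qfd_symm_norm_le (T t) (hTsym t) K hK.le ?_
    intro u
    rw [abs_le]
    have h1 := hlower t ht u
    have h2 := hupper t ht u
    have h3 := (hBform u).2
    have h4 := (hBform u).1
    constructor
    · have h5 : C * (⟪J u, B (J u)⟫_ℂ).re ≤ C * (‖B‖ * ‖u‖ ^ 2) :=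
        mul_le_mul_of_nonneg_left h3 hC.le
      have h6 : (0:ℝ) ≤ C⁻¹ * ‖u‖ ^ 2 := by positivity
      nlinarith [sq_nonneg ‖u‖]
    · nlinarith [sq_nonneg ‖u‖]
  -- the inverse operators
  have hex : ∀ t ∈ Ico (0:ℝ) 1, ∃ R : V →L[ℂ] V,
      (∀ u, S t (R u) = u) ∧ (∀ u, R (S t u) = u) := by
    intro t ht
    exact qfd_inverse_exists (S t) (hSsym t) C⁻¹ (by positivity) (hScoer t ht)
  choose! R hR1 hR2 using hex
  have hRsym : ∀ t ∈ Ico (0:ℝ) 1, ∀ u v : V, ⟪R t u, v⟫_ℂ = ⟪u, R t v⟫_ℂ := by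
    intro t ht u v
    conv_lhs => rw [← hR1 t ht v]
    rw [← hSsym t (R t u) (R t v), hR1 t ht u]
  have hRnorm : ∀ t ∈ Ico (0:ℝ) 1, ∀ u : V, ‖R t u‖ ≤ C * ‖u‖ := by
    intro t ht u
    rcases eq_or_ne (R t u) 0 with h0 | h0
    · rw [h0, norm_zero]; positivity
    have hpos : 0 < ‖R t u‖ := norm_pos_iff.2 h0
    have h1 : C⁻¹ * ‖R t u‖ ^ 2 ≤ (⟪R t u, S t (R t u)⟫_ℂ).re := hScoer t ht _
    rw [hR1 t ht u] at h1
    have h2 : (⟪R t u, u⟫_ℂ).re ≤ ‖R t u‖ * ‖u‖ := by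
      calc (⟪R t u, u⟫_ℂ).re ≤ ‖⟪R t u, u⟫_ℂ‖ := Complex.re_le_norm _
        _ = ‖⟪R t u, u⟫_ℂ‖ := rfl
        _ ≤ ‖R t u‖ * ‖u‖ := norm_inner_le_norm _ _
    have h3 : C⁻¹ * ‖R t u‖ ^ 2 ≤ ‖R t u‖ * ‖u‖ := le_trans h1 h2
    have h4 : ‖R t u‖ ≤ C * ‖u‖ := by
      have hCi : 0 < C⁻¹ := by positivity
      rw [ ← mul_le_mul_iff_right₀ hCi]
      calc C⁻¹ * ‖R t u‖ ≤ ‖u‖ := by nlinarith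
        _ = C⁻¹ * (C * ‖u‖) := by field_simp
    exact h4
  -- lower bound for the R-form
  set kp : ℝ := C⁻¹ / K ^ 2 with hkpdef
  have hkp : 0 < kp := by positivity
  have hRform : ∀ t ∈ Ico (0:ℝ) 1, ∀ u : V, kp * ‖u‖ ^ 2 ≤ (⟪u, R t u⟫_ℂ).re := by
    intro t ht u
    set w := R t u with hwdef
    have hu : S t w = u := hR1 t ht u
    have hw : (⟪u, w⟫_ℂ).re = (⟪w, S t w⟫_ℂ).re := by
      rw [← hu, hSsym t w w]
    have h1 : C⁻¹ * ‖w‖ ^ 2 ≤ (⟪w, S t w⟫_ℂ).re := hScoer t ht _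
    have h2 : ‖u‖ ≤ K * ‖w‖ := by
      rw [← hu]; exact hSnorm t ht w
    rw [hw]
    refine le_trans ?_ h1
    rw [hkpdef]
    have hCi : (0:ℝ) < C⁻¹ := by positivity
    have h3 : ‖u‖ ^ 2 ≤ K ^ 2 * ‖w‖ ^ 2 := by nlinarith [norm_nonneg u, norm_nonneg w]
    rw [div_mul_eq_mul_div, div_le_iff₀ (by positivity)]
    nlinarith
  -- Lipschitz continuity of T in operator norm
  have hTlipform : ∀ u : V, ∀ s ∈ Ico (0:ℝ) 1, ∀ t ∈ Ico (0:ℝ) 1,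
      |(⟪u, T s u⟫_ℂ).re - (⟪u, T t u⟫_ℂ).re| ≤ C * ‖u‖ ^ 2 * |s - t| := by
    intro u s hs t ht
    have hconv : Convex ℝ (Ico (0:ℝ) 1) := convex_Ico 0 1
    have := hconv.norm_image_sub_le_of_norm_hasDerivWithin_le
      (f := fun r => (⟪u, T r u⟫_ℂ).re) (f' := fun r => Td r u) (C := C * ‖u‖ ^ 2)
      (fun r hr => (hTd u r hr).hasDerivWithinAt)
      (fun r hr => by simpa [Real.norm_eq_abs] using hTdbound u r hr) ht hs
    simpa [Real.norm_eq_abs] using this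
  have hTlip : ∀ s ∈ Ico (0:ℝ) 1, ∀ t ∈ Ico (0:ℝ) 1, ∀ u : V,
      ‖T s u - T t u‖ ≤ C * |s - t| * ‖u‖ := by
    intro s hs t ht u
    have hsub : ∀ w : V, T s w - T t w = (T s - T t) w := fun w => rfl
    rw [hsub]
    refine qfd_symm_norm_le (T s - T t) ?_ (C * |s - t|) (by positivity) ?_ u
    · intro a b
      simp only [ContinuousLinearMap.sub_apply, inner_sub_left, inner_sub_right,
        hTsym s a b, hTsym t a b]
    · intro w
      have := hTlipform w s hs t ht
      simp only [ContinuousLinearMap.sub_apply, inner_sub_right, Complex.sub_re]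
      calc |(⟪w, T s w⟫_ℂ).re - (⟪w, T t w⟫_ℂ).re| ≤ C * ‖w‖ ^ 2 * |s - t| := this
        _ = C * |s - t| * ‖w‖ ^ 2 := by ring
  -- Lipschitz continuity of R
  have hRlip : ∀ s ∈ Ico (0:ℝ) 1, ∀ t ∈ Ico (0:ℝ) 1, ∀ u : V,
      ‖R s u - R t u‖ ≤ C ^ 3 * |s - t| * ‖u‖ := by
    intro s hs t ht u
    set w := R t u with hwdef
    have e4 : S t w - S s w = T t w - T s w := by
      show (T t w + (C:ℂ) • Bt w) - (T s w + (C:ℂ) • Bt w) = T t w - T s w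
      exact add_sub_add_right_eq_sub _ _ _
    have key : R s u - R t u = R s (T t w - T s w) := by
      have e1 : R s (S t w) = R s u := by rw [hR1 t ht u]
      have e2 : R s (S s w) = w := hR2 s hs w
      calc R s u - R t u = R s (S t w) - R s (S s w) := by rw [e1, e2]
        _ = R s (S t w - S s w) := by rw [map_sub]
        _ = R s (T t w - T s w) := by rw [e4]
    rw [key]
    calc ‖R s (T t w - T s w)‖ ≤ C * ‖T t w - T s w‖ := hRnorm s hs _
      _ ≤ C * (C * |t - s| * ‖w‖) := by
          exact mul_le_mul_of_nonneg_left (hTlip t ht s hs w) hC.le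
      _ ≤ C * (C * |t - s| * (C * ‖u‖)) := by
          refine mul_le_mul_of_nonneg_left ?_ hC.le
          exact mul_le_mul_of_nonneg_left (hRnorm t ht u) (by positivity)
      _ = C ^ 3 * |s - t| * ‖u‖ := by rw [abs_sub_comm]; ring
  -- the smoothed trajectory y
  set y : ℝ → V := fun s => E (x s) with hydef
  have hyd : ∀ v : V, ∀ t ∈ Ico (0:ℝ) 1,
      HasDerivAt (fun s => ⟪v, y s⟫_ℂ) (-Complex.I * ⟪v, T t (x t)⟫_ℂ) t := by
    intro v t ht
    have h := hxeq t ht v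
    have heq : (fun s => ⟪J v, J (x s)⟫_ℂ) = fun s => ⟪v, y s⟫_ℂ := by
      funext s
      rw [hydef, hE]
    rwa [heq] at h
  have hynorm : ∀ t ∈ Ico (0:ℝ) 1, ‖y t‖ ≤ M := by
    intro t ht
    exact le_trans (hEnorm (x t)) (hM t ht)
  set L : ℝ := K * M with hLdef
  have hL0 : 0 ≤ L := by positivity
  have hyLip : ∀ s ∈ Ico (0:ℝ) 1, ∀ t ∈ Ico (0:ℝ) 1, ‖y s - y t‖ ≤ L * |s - t| := by
    intro s hs t ht
    set v : V := y s - y t with hvdef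
    have hconv : Convex ℝ (Ico (0:ℝ) 1) := convex_Ico 0 1
    have hmvt := hconv.norm_image_sub_le_of_norm_hasDerivWithin_le
      (f := fun r => ⟪v, y r⟫_ℂ) (f' := fun r => -Complex.I * ⟪v, T r (x r)⟫_ℂ)
      (C := ‖v‖ * L)
      (fun r hr => (hyd v r hr).hasDerivWithinAt)
      (fun r hr => by
        rw [norm_mul]
        have h1 : ‖(-Complex.I : ℂ)‖ = 1 := by simp
        rw [h1, one_mul]
        calc ‖⟪v, T r (x r)⟫_ℂ‖ ≤ ‖v‖ * ‖T r (x r)‖ := norm_inner_le_norm _ _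
          _ ≤ ‖v‖ * (K * ‖x r‖) := by
              exact mul_le_mul_of_nonneg_left (hTnorm r hr (x r)) (norm_nonneg v)
          _ ≤ ‖v‖ * (K * M) := by
              refine mul_le_mul_of_nonneg_left ?_ (norm_nonneg v)
              exact mul_le_mul_of_nonneg_left (hM r hr) hK.le
          _ = ‖v‖ * L := by rw [hLdef]) ht hs
    have hv2 : ‖v‖ ^ 2 ≤ ‖⟪v, y s⟫_ℂ - ⟪v, y t⟫_ℂ‖ := by
      have e1 : ⟪v, y s⟫_ℂ - ⟪v, y t⟫_ℂ = ⟪v, v⟫_ℂ := by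
        rw [← inner_sub_right, ← hvdef]
      rw [e1]
      have e2 : (⟪v, v⟫_ℂ).re = ‖v‖ ^ 2 := by
        rw [← RCLike.re_to_complex, inner_self_eq_norm_sq]
      calc ‖v‖ ^ 2 = (⟪v, v⟫_ℂ).re := e2.symm
        _ ≤ |(⟪v, v⟫_ℂ).re| := le_abs_self _
        _ ≤ ‖⟪v, v⟫_ℂ‖ := Complex.abs_re_le_norm _
        _ = ‖⟪v, v⟫_ℂ‖ := rfl
    have h3 : ‖⟪v, y s⟫_ℂ - ⟪v, y t⟫_ℂ‖ ≤ ‖v‖ * L * ‖s - t‖ := hmvt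
    show ‖v‖ ≤ L * |s - t|
    rcases eq_or_ne v 0 with h0 | h0
    · rw [h0, norm_zero]; positivity
    · have hpos : 0 < ‖v‖ := norm_pos_iff.2 h0
      rw [Real.norm_eq_abs] at h3
      nlinarith [abs_nonneg (s - t)]
  -- the Gronwall functional
  set G : ℝ → ℝ := fun t => (⟪y t, R t (y t)⟫_ℂ).re with hGdef
  have habs : ∀ w w' : V, |(⟪w, w'⟫_ℂ).re| ≤ ‖w‖ * ‖w'‖ := by
    intro w w'
    calc |(⟪w, w'⟫_ℂ).re| ≤ ‖⟪w, w'⟫_ℂ‖ := Complex.abs_re_le_norm _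
      _ = ‖⟪w, w'⟫_ℂ‖ := rfl
      _ ≤ ‖w‖ * ‖w'‖ := norm_inner_le_norm _ _
  have hGlow : ∀ t ∈ Ico (0:ℝ) 1, kp * ‖y t‖ ^ 2 ≤ G t := fun t ht => hRform t ht (y t)
  have hy0 : y 0 = 0 := by rw [hydef]; simp only [hx0, map_zero]
  have hG0 : G 0 = 0 := by
    rw [hGdef]
    simp only [hy0, inner_zero_left, Complex.zero_re]
  have hvform : ∀ t ∈ Ico (0:ℝ) 1, ‖R t (y t)‖ ^ 2 ≤ C * G t := by
    intro t ht
    set v := R t (y t) with hvdef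
    have h1 : C⁻¹ * ‖v‖ ^ 2 ≤ (⟪v, S t v⟫_ℂ).re := hScoer t ht v
    have h2 : S t v = y t := hR1 t ht (y t)
    rw [h2] at h1
    have h3 : (⟪v, y t⟫_ℂ).re = G t := by
      rw [hGdef]
      have e : ⟪y t, v⟫_ℂ = (starRingEnd ℂ) ⟪v, y t⟫_ℂ := (inner_conj_symm (y t) v).symm
      show (⟪v, y t⟫_ℂ).re = (⟪y t, v⟫_ℂ).re
      rw [e, Complex.conj_re]
    rw [h3] at h1
    have h4 := mul_le_mul_of_nonneg_left h1 hC.le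
    rw [← mul_assoc, mul_inv_cancel₀ hC.ne', one_mul] at h4
    exact h4
  -- the key derivative bound
  have hdre : ∀ t ∈ Ico (0:ℝ) 1,
      2 * ((-Complex.I * ⟪R t (y t), T t (x t)⟫_ℂ).re) ≤ C ^ 3 * G t := by
    intro t ht
    set v := R t (y t) with hvdef
    set z := ⟪v, T t (x t)⟫_ℂ with hzdef
    set z2 := ⟪BV v, T t v⟫_ℂ with hz2def
    have hre : (-Complex.I * z).re = z.im := by
      simp [Complex.mul_re]
    have hz : z = ⟪v, S t (x t)⟫_ℂ - (C:ℂ) * ⟪v, Bt (x t)⟫_ℂ := by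
      rw [hzdef, hSapply, inner_add_right, inner_smul_right]
      ring
    have h1 : (⟪v, S t (x t)⟫_ℂ).im = 0 := by
      rw [← hSsym t v (x t)]
      rw [hvdef, hR1 t ht (y t)]
      have e1 : ⟪y t, x t⟫_ℂ = (starRingEnd ℂ) ⟪x t, E (x t)⟫_ℂ := by
        show ⟪E (x t), x t⟫_ℂ = (starRingEnd ℂ) ⟪x t, E (x t)⟫_ℂ
        exact (inner_conj_symm (E (x t)) (x t)).symm
      rw [e1, hE, Complex.conj_im]
      have : (⟪J (x t), J (x t)⟫_ℂ).im = 0 := by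
        rw [← RCLike.im_to_complex]
        exact inner_self_im _
      rw [this, neg_zero]
    have h2 : ⟪v, Bt (x t)⟫_ℂ = z2 + (C:ℂ) * ⟪J (BV v), J (BV v)⟫_ℂ := by
      have e1 : ⟪v, Bt (x t)⟫_ℂ = ⟪BV v, y t⟫_ℂ := by
        show ⟪v, Bt (x t)⟫_ℂ = ⟪BV v, E (x t)⟫_ℂ
        rw [hBt, ← hBsym', ← hBV, ← hE (BV v) (x t)]
      have e2 : y t = S t v := (hR1 t ht (y t)).symm
      rw [e1, e2, hSapply, inner_add_right, inner_smul_right]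
      congr 1
      rw [hBt, ← hBV]
    have h3 : z.im = -(C * z2.im) := by
      rw [hz, Complex.sub_im, h1, zero_sub, h2, Complex.mul_im]
      have him : (⟪J (BV v), J (BV v)⟫_ℂ).im = 0 := by
        rw [← RCLike.im_to_complex]
        exact inner_self_im _
      rw [Complex.add_im, Complex.mul_im, him]
      simp
    have h4 : -2 * z2.im ≤ C * ‖v‖ ^ 2 := by
      have hc := hcommB t ht v
      have e1 : ⟪v, T t (BV v)⟫_ℂ = (starRingEnd ℂ) z2 := by
        rw [hz2def, ← hTsym t v (BV v)]
        exact (inner_conj_symm (T t v) (BV v)).symm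
      rw [e1] at hc
      have e2 : (-(Complex.I * ((starRingEnd ℂ) z2 - z2))).re = -2 * z2.im := by
        simp [Complex.mul_re, Complex.sub_im, Complex.sub_re, Complex.conj_re, Complex.conj_im]
        ring
      rwa [e2] at hc
    have h5 : ‖v‖ ^ 2 ≤ C * G t := hvform t ht
    rw [hre, h3]
    have h6 : -2 * z2.im ≤ C * (C * G t) := by
      refine le_trans h4 ?_
      exact mul_le_mul_of_nonneg_left h5 hC.le
    calc 2 * -(C * z2.im) = C * (-2 * z2.im) := by ring
      _ ≤ C * (C * (C * G t)) := by
          refine mul_le_mul_of_nonneg_left ?_ hC.le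
          refine le_trans h4 ?_
          exact mul_le_mul_of_nonneg_left h5 hC.le
      _ = C ^ 3 * G t := by ring
  -- constants for the Gronwall argument
  set C1 : ℝ := C ^ 3 * (kp⁻¹ + 1) with hC1def
  set c2 : ℝ := 2 * M * L + L ^ 2 with hc2def
  set c3 : ℝ := C ^ 3 * c2 + C * L ^ 2 with hc3def
  have hc2 : 0 ≤ c2 := by positivity
  have hc3 : 0 ≤ c3 := by positivity
  intro t0 ht0
  have hb1 : t0 < 1 := ht0.2
  have hb0 : 0 ≤ t0 := ht0.1
  have hsub : Icc (0:ℝ) t0 ⊆ Ico 0 1 := fun r hr => ⟨hr.1, lt_of_le_of_lt hr.2 hb1⟩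
  -- continuity of G on [0, t0]
  have hGcont : ContinuousOn G (Icc 0 t0) := by
    set Lg : ℝ := C ^ 3 * M ^ 2 + 2 * C * M * L with hLgdef
    have hLg0 : 0 ≤ Lg := by positivity
    have hlip : ∀ s ∈ Icc (0:ℝ) t0, ∀ t ∈ Icc (0:ℝ) t0, |G s - G t| ≤ Lg * |s - t| := by
      intro s hs t ht
      have hsI := hsub hs
      have htI := hsub ht
      have e0 : G s - G t = (⟪y s, R s (y s) - R t (y s)⟫_ℂ).re
          + ((⟪y s - y t, R t (y s)⟫_ℂ).re + (⟪y t, R t (y s) - R t (y t)⟫_ℂ).re) := by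
        simp only [hGdef, inner_sub_left, inner_sub_right, Complex.sub_re, Complex.add_re]
        ring
      rw [e0]
      have hd1 : ‖R s (y s) - R t (y s)‖ ≤ C ^ 3 * |s - t| * M := by
        refine (hRlip s hsI t htI (y s)).trans ?_
        exact mul_le_mul_of_nonneg_left (hynorm s hsI) (by positivity)
      have b1 : |(⟪y s, R s (y s) - R t (y s)⟫_ℂ).re| ≤ M * (C ^ 3 * |s - t| * M) :=
        le_trans (habs _ _) (mul_le_mul (hynorm s hsI) hd1 (norm_nonneg _) hM0)
      have hd2 : ‖y s - y t‖ ≤ L * |s - t| := hyLip s hsI t htI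
      have b2 : |(⟪y s - y t, R t (y s)⟫_ℂ).re| ≤ L * |s - t| * (C * M) := by
        refine le_trans (habs _ _) ?_
        refine mul_le_mul hd2 ?_ (norm_nonneg _) (by positivity)
        exact (hRnorm t htI (y s)).trans (mul_le_mul_of_nonneg_left (hynorm s hsI) hC.le)
      have b3 : |(⟪y t, R t (y s) - R t (y t)⟫_ℂ).re| ≤ M * (C * (L * |s - t|)) := by
        refine le_trans (habs _ _) ?_
        refine mul_le_mul (hynorm t htI) ?_ (norm_nonneg _) hM0
        have hmap : R t (y s) - R t (y t) = R t (y s - y t) := (map_sub _ _ _).symm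
        rw [hmap]
        exact (hRnorm t htI _).trans (mul_le_mul_of_nonneg_left hd2 hC.le)
      have habsin : |(⟪y s - y t, R t (y s)⟫_ℂ).re + (⟪y t, R t (y s) - R t (y t)⟫_ℂ).re|
          ≤ |(⟪y s - y t, R t (y s)⟫_ℂ).re| + |(⟪y t, R t (y s) - R t (y t)⟫_ℂ).re| :=
        abs_add_le _ _
      have habs3 : |(⟪y s, R s (y s) - R t (y s)⟫_ℂ).re
          + ((⟪y s - y t, R t (y s)⟫_ℂ).re + (⟪y t, R t (y s) - R t (y t)⟫_ℂ).re)|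
          ≤ |(⟪y s, R s (y s) - R t (y s)⟫_ℂ).re|
          + (|(⟪y s - y t, R t (y s)⟫_ℂ).re| + |(⟪y t, R t (y s) - R t (y t)⟫_ℂ).re|) :=
        le_trans (abs_add_le _ _) (by linarith)
      have hfin : M * (C ^ 3 * |s - t| * M) + (L * |s - t| * (C * M) + M * (C * (L * |s - t|)))
          = Lg * |s - t| := by rw [hLgdef]; ring
      linarith
    have hlw : LipschitzOnWith (Real.toNNReal Lg) G (Icc 0 t0) := by
      rw [lipschitzOnWith_iff_dist_le_mul]
      intro a ha b hb
      rw [Real.dist_eq, Real.dist_eq]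
      refine le_trans (hlip a ha b hb) ?_
      rw [Real.coe_toNNReal _ hLg0]
    exact hlw.continuousOn
  -- the liminf slope hypothesis of the Gronwall lemma
  have hfrk : ∀ t ∈ Ico (0:ℝ) t0, ∀ r, C1 * G t < r →
      ∃ᶠ z in nhdsWithin t (Ioi t), (z - t)⁻¹ * (G z - G t) < r := by
    intro t ht r hr
    have htI : t ∈ Ico (0:ℝ) 1 := ⟨ht.1, lt_trans ht.2 hb1⟩
    set v : V := R t (y t) with hvdef
    set dd : ℝ := 2 * ((-Complex.I * ⟪v, T t (x t)⟫_ℂ).re) with hdddef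
    have hdd : dd ≤ C ^ 3 * G t := hdre t htI
    have hd := hyd v t htI
    set ψ : ℝ → ℝ := fun s => 2 * (⟪v, y s⟫_ℂ).re with hψdef
    have hψ : HasDerivAt ψ dd t := by
      have h1 : HasDerivAt (fun s => (⟪v, y s⟫_ℂ).re)
          ((-Complex.I * ⟪v, T t (x t)⟫_ℂ).re) t :=
        Complex.reCLM.hasFDerivAt.comp_hasDerivAt t hd
      have h2 := h1.const_mul (2:ℝ)
      rw [hψdef, hdddef]
      exact h2
    have hslope : Filter.Tendsto (slope ψ t) (nhdsWithin t (Ioi t)) (nhds dd) := by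
      refine (hasDerivAt_iff_tendsto_slope.1 hψ).mono_left (nhdsWithin_mono t ?_)
      intro z hz
      exact Set.mem_compl_singleton_iff.2 (ne_of_gt hz)
    set ep : ℝ := r - C1 * G t with hepdef
    have hep : 0 < ep := by rw [hepdef]; linarith
    have ev1 : ∀ᶠ z in nhdsWithin t (Ioi t), slope ψ t z < dd + ep / 2 :=
      hslope.eventually (gt_mem_nhds (by linarith))
    set u : ℝ := min 1 (t + min 1 (ep / (2 * (c3 + 1)))) with hudef
    have htu : t < u := by
      rw [hudef]
      refine lt_min htI.2 ?_
      have hpos : 0 < min 1 (ep / (2 * (c3 + 1))) := lt_min one_pos (by positivity)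
      linarith
    have ev2 : ∀ᶠ z in nhdsWithin t (Ioi t), z ∈ Ioo t u := by
      filter_upwards [Ioo_mem_nhdsGT_of_mem (⟨le_refl t, htu⟩ : t ∈ Ico t u)] with z hz
      exact hz
    refine ((ev1.and ev2).mono ?_).frequently
    rintro z ⟨hz1, hz2⟩
    have hzt : 0 < z - t := sub_pos.2 hz2.1
    have hz1' : z < 1 := lt_of_lt_of_le hz2.2 (min_le_left _ _)
    have hzI : z ∈ Ico (0:ℝ) 1 := ⟨le_trans htI.1 hz2.1.le, hz1'⟩
    have hzu : z - t < min 1 (ep / (2 * (c3 + 1))) := by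
      have h1 : z < t + min 1 (ep / (2 * (c3 + 1))) :=
        lt_of_lt_of_le hz2.2 (min_le_right _ _)
      linarith
    have hzt1 : z - t ≤ 1 := le_trans hzu.le (min_le_left _ _)
    have hztc3 : (z - t) * c3 < ep / 2 := by
      have h1 : z - t < ep / (2 * (c3 + 1)) := lt_of_lt_of_le hzu (min_le_right _ _)
      have h2 : (z - t) * c3 ≤ (z - t) * (c3 + 1) := by nlinarith
      have h3 : (z - t) * (c3 + 1) < ep / (2 * (c3 + 1)) * (c3 + 1) :=
        mul_lt_mul_of_pos_right h1 (by positivity)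
      have h4 : ep / (2 * (c3 + 1)) * (c3 + 1) = ep / 2 := by field_simp
      linarith
    set Δ : V := y z - y t with hΔdef
    have hΔn : ‖Δ‖ ≤ L * (z - t) := by
      rw [hΔdef]
      have h1 := hyLip z hzI t htI
      rwa [abs_of_pos hzt] at h1
    -- decomposition of the increment
    have eA : (⟪y z, R t (y z)⟫_ℂ).re - (⟪y t, R t (y t)⟫_ℂ).re
        = 2 * (⟪v, Δ⟫_ℂ).re + (⟪Δ, R t Δ⟫_ℂ).re := by
      have h1 : ⟪v, Δ⟫_ℂ = ⟪y t, R t Δ⟫_ℂ := hRsym t htI (y t) Δ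
      have h2 : (⟪Δ, v⟫_ℂ).re = (⟪v, Δ⟫_ℂ).re := by
        rw [← inner_conj_symm Δ v, Complex.conj_re]
      have h3 : y z = y t + Δ := by rw [hΔdef]; abel
      rw [h3]
      simp only [map_add, inner_add_left, inner_add_right, Complex.add_re]
      rw [← h1, h2]
      ring
    have eψ : ψ z - ψ t = 2 * (⟪v, Δ⟫_ℂ).re := by
      simp only [hψdef, hΔdef, inner_sub_right, Complex.sub_re]
      ring
    have e0 : G z - G t = (⟪y z, R z (y z) - R t (y z)⟫_ℂ).re + (ψ z - ψ t)
        + (⟪Δ, R t Δ⟫_ℂ).re := by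
      have eB : G z - G t = (⟪y z, R z (y z) - R t (y z)⟫_ℂ).re
          + ((⟪y z, R t (y z)⟫_ℂ).re - (⟪y t, R t (y t)⟫_ℂ).re) := by
        simp only [hGdef, inner_sub_right, Complex.sub_re]
        ring
      rw [eB, eA, eψ]
      ring
    -- bounds for the three pieces
    have hyz2 : ‖y z‖ ^ 2 ≤ kp⁻¹ * G t + (z - t) * c2 := by
      have h0 : ‖y z‖ ≤ ‖y t‖ + L * (z - t) := by
        have h1 : ‖y z‖ - ‖y t‖ ≤ ‖y z - y t‖ := norm_sub_norm_le _ _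
        have h2 : ‖y z - y t‖ ≤ L * (z - t) := hΔn
        linarith
      have hyt2 : ‖y t‖ ^ 2 ≤ kp⁻¹ * G t := by
        have h2 := mul_le_mul_of_nonneg_left (hGlow t htI) (le_of_lt (inv_pos.2 hkp))
        rw [← mul_assoc, inv_mul_cancel₀ hkp.ne', one_mul] at h2
        exact h2
      have h3 : 2 * ‖y t‖ * (L * (z - t)) ≤ 2 * M * L * (z - t) := by
        have hx1 : ‖y t‖ * (L * (z - t)) ≤ M * (L * (z - t)) :=
          mul_le_mul_of_nonneg_right (hynorm t htI) (mul_nonneg hL0 hzt.le)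
        linarith
      have h4 : (L * (z - t)) ^ 2 ≤ L ^ 2 * (z - t) := by
        have hx2 : (z - t) ^ 2 ≤ z - t := by nlinarith [hzt.le, hzt1]
        calc (L * (z - t)) ^ 2 = L ^ 2 * (z - t) ^ 2 := by ring
          _ ≤ L ^ 2 * (z - t) := mul_le_mul_of_nonneg_left hx2 (sq_nonneg L)
      have h5 : ‖y z‖ ^ 2 ≤ (‖y t‖ + L * (z - t)) ^ 2 :=
        pow_le_pow_left₀ (norm_nonneg _) h0 2
      have h6 : (‖y t‖ + L * (z - t)) ^ 2
          = ‖y t‖ ^ 2 + 2 * ‖y t‖ * (L * (z - t)) + (L * (z - t)) ^ 2 := by ring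
      have h7 : (z - t) * c2 = 2 * M * L * (z - t) + L ^ 2 * (z - t) := by
        rw [hc2def]; ring
      linarith
    have b1 : (⟪y z, R z (y z) - R t (y z)⟫_ℂ).re ≤ C ^ 3 * (z - t) * ‖y z‖ ^ 2 := by
      refine le_trans (le_abs_self _) ((habs _ _).trans ?_)
      have h1 := hRlip z hzI t htI (y z)
      rw [abs_of_pos hzt] at h1
      calc ‖y z‖ * ‖R z (y z) - R t (y z)‖ ≤ ‖y z‖ * (C ^ 3 * (z - t) * ‖y z‖) :=
            mul_le_mul_of_nonneg_left h1 (norm_nonneg _)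
        _ = C ^ 3 * (z - t) * ‖y z‖ ^ 2 := by ring
    have b3 : (⟪Δ, R t Δ⟫_ℂ).re ≤ C * L ^ 2 * (z - t) ^ 2 := by
      refine le_trans (le_abs_self _) ((habs _ _).trans ?_)
      calc ‖Δ‖ * ‖R t Δ‖ ≤ (L * (z - t)) * (C * (L * (z - t))) :=
            mul_le_mul hΔn ((hRnorm t htI Δ).trans
              (mul_le_mul_of_nonneg_left hΔn hC.le)) (norm_nonneg _) (by positivity)
        _ = C * L ^ 2 * (z - t) ^ 2 := by ring
    -- put everything together
    have hψslope : ψ z - ψ t = (z - t) * slope ψ t z := by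
      rw [slope_def_field]
      field_simp
    have hb1' : C ^ 3 * (z - t) * ‖y z‖ ^ 2
        ≤ (z - t) * (C ^ 3 * kp⁻¹ * G t) + (z - t) ^ 2 * (C ^ 3 * c2) := by
      have h1 := mul_le_mul_of_nonneg_left hyz2 (by positivity : (0:ℝ) ≤ C ^ 3 * (z - t))
      have h2 : C ^ 3 * (z - t) * (kp⁻¹ * G t + (z - t) * c2)
          = (z - t) * (C ^ 3 * kp⁻¹ * G t) + (z - t) ^ 2 * (C ^ 3 * c2) := by ring
      linarith
    have hGtot : G z - G t
        ≤ (z - t) * (C ^ 3 * kp⁻¹ * G t + (z - t) * c3 + slope ψ t z) := by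
      rw [e0, hψslope]
      have h1 : (z - t) * (C ^ 3 * kp⁻¹ * G t + (z - t) * c3 + slope ψ t z)
          = ((z - t) * (C ^ 3 * kp⁻¹ * G t) + (z - t) ^ 2 * (C ^ 3 * c2))
            + (z - t) * slope ψ t z + (C * L ^ 2 * (z - t) ^ 2) := by
        rw [hc3def]; ring
      linarith
    have hfinal : (z - t)⁻¹ * (G z - G t)
        ≤ C ^ 3 * kp⁻¹ * G t + (z - t) * c3 + slope ψ t z := by
      rw [inv_mul_eq_div, div_le_iff₀ hzt]
      calc G z - G t ≤ (z - t) * (C ^ 3 * kp⁻¹ * G t + (z - t) * c3 + slope ψ t z) := hGtot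
        _ = (C ^ 3 * kp⁻¹ * G t + (z - t) * c3 + slope ψ t z) * (z - t) := by ring
    have hlast : C ^ 3 * kp⁻¹ * G t + (z - t) * c3 + slope ψ t z < r := by
      have hGtnn : 0 ≤ G t := le_trans (by positivity) (hGlow t htI)
      have hC1G : C ^ 3 * kp⁻¹ * G t + C ^ 3 * G t = C1 * G t := by rw [hC1def]; ring
      have hre : r = C1 * G t + ep := by rw [hepdef]; ring
      linarith
    linarith
  -- apply the Gronwall lemma
  have hGb := le_gronwallBound_of_liminf_deriv_right_le (f := G) (f' := fun t => C1 * G t)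
    (δ := 0) (K := C1) (ε := 0) (a := 0) (b := t0) hGcont hfrk (le_of_eq hG0)
    (fun t _ => by simp)
  have hGt0 : G t0 ≤ 0 := by
    have h1 := hGb t0 ⟨hb0, le_refl t0⟩
    rwa [sub_zero, gronwallBound_ε0_δ0] at h1
  -- conclude
  have hyt0 : y t0 = 0 := by
    have h1 := hGlow t0 ht0
    have h2 : ‖y t0‖ = 0 := by
      by_contra h0
      have hpos : 0 < ‖y t0‖ := (norm_nonneg _).lt_of_ne (Ne.symm h0)
      nlinarith [mul_pos hkp (pow_pos hpos 2)]
    exact norm_eq_zero.1 h2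
  have hJx : ⟪J (x t0), J (x t0)⟫_ℂ = 0 := by
    rw [← hE (x t0) (x t0)]
    have h1 : E (x t0) = y t0 := rfl
    rw [h1, hyt0, inner_zero_right]
  have hJ0 : J (x t0) = 0 := inner_self_eq_zero.1 hJx
  apply hJinj
  rw [hJ0, map_zero]
end
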